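/- arXiv:2502.04586 — 2 statements merged into one kernel-verified Lean document; each statement's English description precedes it below -/
import Mathlib

section
/- Let nᵢ and nⱼ be unit vectors in the Euclidean plane ℝ² with angle φ ∈ (0, π) between them (so cos φ = ⟪nᵢ, nⱼ⟫), let cᵢ, cⱼ be real numbers, let w ≥ 0, and let q be the unique point with ⟪q, nᵢ⟫ + cᵢ = 0 and ⟪q, nⱼ⟫ + cⱼ = 0. Then the intersection of the closed strips Sᵢ = {p ∈ ℝ² : |⟪p, nᵢ⟫ + cᵢ| ≤ w/2} and Sⱼ = {p ∈ ℝ² : |⟪p, nⱼ⟫ + cⱼ| ≤ w/2} is contained in the closed ball of radius w/(2·min(sin(φ/2), cos(φ/2))) centered at q. -/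
open scoped RealInnerProductSpace

private lemma stmt_6_aux_sum (A B w : ℝ) (hA : |A| ≤ w / 2) (hB : |B| ≤ w / 2) :
    |A + B| + |A - B| ≤ w := by
  rcases abs_cases A with ⟨h1, _⟩ | ⟨h1, _⟩ <;> rcases abs_cases B with ⟨h2, _⟩ | ⟨h2, _⟩ <;>
    rcases abs_cases (A + B) with ⟨h3, _⟩ | ⟨h3, _⟩ <;>
    rcases abs_cases (A - B) with ⟨h4, _⟩ | ⟨h4, _⟩ <;> linarith

private lemma stmt_6_aux_XY (A B w : ℝ) (h : |A + B| + |A - B| ≤ w) :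
    (A + B) ^ 2 + (A - B) ^ 2 ≤ w ^ 2 := by
  have h0 : (0:ℝ) ≤ |A + B| + |A - B| := by positivity
  have h' := mul_self_le_mul_self h0 h
  have e1h : |A + B| ^ 2 = (A + B) ^ 2 := sq_abs _
  have e2h : |A - B| ^ 2 = (A - B) ^ 2 := sq_abs _
  have h3 : 0 ≤ |A + B| * |A - B| := mul_nonneg (abs_nonneg _) (abs_nonneg _)
  nlinarith [h', e1h, e2h, h3]

set_option maxHeartbeats 1000000 in
/-- The intersection of two closed strips of width `w` whose center lines have unit normals
at angle `φ ∈ (0, π)` is contained in the closed ball of radius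
`w / (2 · min (sin (φ/2)) (cos (φ/2)))` centered at the intersection point `q` of the
center lines. -/
theorem stmt_6 (ni nj : EuclideanSpace ℝ (Fin 2)) (hni : ‖ni‖ = 1) (hnj : ‖nj‖ = 1)
    (φ : ℝ) (hφ : φ ∈ Set.Ioo 0 Real.pi) (hcos : Real.cos φ = ⟪ni, nj⟫)
    (ci cj w : ℝ) (hw : 0 ≤ w) (q : EuclideanSpace ℝ (Fin 2))
    (hqi : ⟪q, ni⟫ + ci = 0) (hqj : ⟪q, nj⟫ + cj = 0) :
    {p : EuclideanSpace ℝ (Fin 2) | |⟪p, ni⟫ + ci| ≤ w / 2} ∩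
        {p : EuclideanSpace ℝ (Fin 2) | |⟪p, nj⟫ + cj| ≤ w / 2} ⊆
      Metric.closedBall q (w / (2 * min (Real.sin (φ / 2)) (Real.cos (φ / 2)))) := by
  obtain ⟨hφ0, hφπ⟩ := hφ
  set s := Real.sin (φ / 2) with hs_def
  set c := Real.cos (φ / 2) with hc_def
  have hs : 0 < s := Real.sin_pos_of_pos_of_lt_pi (by linarith) (by linarith [Real.pi_pos])
  have hc : 0 < c := Real.cos_pos_of_mem_Ioo ⟨by linarith [Real.pi_pos], by linarith⟩
  have hc2 : c ^ 2 = (1 + Real.cos φ) / 2 := by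
    rw [hc_def, Real.cos_sq]; rw [show 2 * (φ / 2) = φ by ring]; ring
  have hs2 : s ^ 2 = (1 - Real.cos φ) / 2 := by
    have h := Real.sin_sq_add_cos_sq (φ / 2)
    rw [← hs_def, ← hc_def] at h
    linarith
  have hii : ⟪ni, ni⟫ = 1 := by
    rw [real_inner_self_eq_norm_sq, hni]; norm_num
  have hjj : ⟪nj, nj⟫ = 1 := by
    rw [real_inner_self_eq_norm_sq, hnj]; norm_num
  have hji : ⟪nj, ni⟫ = Real.cos φ := by rw [real_inner_comm]; exact hcos.symm
  -- orthonormal frame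
  set e1 : EuclideanSpace ℝ (Fin 2) := (2 * c)⁻¹ • (ni + nj) with he1
  set e2 : EuclideanSpace ℝ (Fin 2) := (2 * s)⁻¹ • (ni - nj) with he2
  have h11 : ⟪e1, e1⟫ = 1 := by
    rw [he1, real_inner_smul_left, real_inner_smul_right, inner_add_add_self, hii, hjj,
      ← hcos, hji]
    field_simp
    linear_combination (-4 : ℝ) * hc2
  have h22 : ⟪e2, e2⟫ = 1 := by
    rw [he2, real_inner_smul_left, real_inner_smul_right, inner_sub_sub_self, hii, hjj,
      ← hcos, hji]
    field_simp
    linear_combination (-4 : ℝ) * hs2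
  have h12 : ⟪e1, e2⟫ = 0 := by
    rw [he1, he2, real_inner_smul_left, real_inner_smul_right, inner_add_left,
      inner_sub_right, inner_sub_right, hii, hjj, ← hcos, hji]
    ring
  have hne1 : ‖e1‖ = 1 := by
    refine (sq_eq_sq₀ (norm_nonneg e1) zero_le_one).mp ?_
    rw [← real_inner_self_eq_norm_sq, h11]; norm_num
  have hne2 : ‖e2‖ = 1 := by
    refine (sq_eq_sq₀ (norm_nonneg e2) zero_le_one).mp ?_
    rw [← real_inner_self_eq_norm_sq, h22]; norm_num
  have h21 : ⟪e2, e1⟫ = 0 := by rw [real_inner_comm]; exact h12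
  have hon : Orthonormal ℝ ![e1, e2] := by
    constructor
    · intro i
      fin_cases i
      · exact hne1
      · exact hne2
    · intro i j hij'
      fin_cases i <;> fin_cases j <;>
        first
          | exact absurd rfl hij'
          | exact h12
          | exact h21
  have hcard : Fintype.card (Fin 2) = Module.finrank ℝ (EuclideanSpace ℝ (Fin 2)) := by
    simp [finrank_euclideanSpace]
  let b : Module.Basis (Fin 2) ℝ (EuclideanSpace ℝ (Fin 2)) :=
    basisOfOrthonormalOfCardEqFinrank hon hcard
  have hb : ⇑b = ![e1, e2] := coe_basisOfOrthonormalOfCardEqFinrank hon hcard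
  have hbon : Orthonormal ℝ (⇑b) := by rw [hb]; exact hon
  let onb : OrthonormalBasis (Fin 2) ℝ (EuclideanSpace ℝ (Fin 2)) :=
    b.toOrthonormalBasis hbon
  have honb : ⇑onb = ![e1, e2] := by
    rw [show ⇑onb = ⇑b from Module.Basis.coe_toOrthonormalBasis b hbon, hb]
  -- main argument
  intro p hp
  obtain ⟨hpi, hpj⟩ := hp
  simp only [Set.mem_setOf_eq] at hpi hpj
  set v : EuclideanSpace ℝ (Fin 2) := p - q with hv
  have ha : ⟪v, ni⟫ = ⟪p, ni⟫ + ci := by rw [hv, inner_sub_left]; linarith [hqi]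
  have hbj : ⟪v, nj⟫ = ⟪p, nj⟫ + cj := by rw [hv, inner_sub_left]; linarith [hqj]
  set A : ℝ := ⟪v, ni⟫ with hA
  set B : ℝ := ⟪v, nj⟫ with hB
  have hAw : |A| ≤ w / 2 := by rw [ha]; exact hpi
  have hBw : |B| ≤ w / 2 := by rw [hbj]; exact hpj
  have hnorm : ‖v‖ ^ 2 = ⟪v, e1⟫ ^ 2 + ⟪v, e2⟫ ^ 2 := by
    have h := onb.sum_inner_mul_inner v v
    rw [Fin.sum_univ_two, honb] at h
    simp only [Matrix.cons_val_zero, Matrix.cons_val_one, Matrix.head_cons] at h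
    rw [← real_inner_self_eq_norm_sq, ← h, real_inner_comm e1 v, real_inner_comm e2 v]
    ring
  have hv1 : ⟪v, e1⟫ = (2 * c)⁻¹ * (A + B) := by
    rw [he1, real_inner_smul_right, inner_add_right]
  have hv2 : ⟪v, e2⟫ = (2 * s)⁻¹ * (A - B) := by
    rw [he2, real_inner_smul_right, inner_sub_right]
  set m := min s c with hm
  have hm0 : 0 < m := lt_min hs hc
  have hms : m ≤ s := min_le_left _ _
  have hmc : m ≤ c := min_le_right _ _
  rw [Metric.mem_closedBall, dist_eq_norm, ← hv]
  have hsum : |A + B| + |A - B| ≤ w := stmt_6_aux_sum A B w hAw hBw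
  have hXY : (A + B) ^ 2 + (A - B) ^ 2 ≤ w ^ 2 := stmt_6_aux_XY A B w hsum
  have key : ‖v‖ ^ 2 ≤ (w / (2 * m)) ^ 2 := by
    calc ‖v‖ ^ 2 = (A + B) ^ 2 / (4 * c ^ 2) + (A - B) ^ 2 / (4 * s ^ 2) := by
          rw [hnorm, hv1, hv2]
          field_simp
          ring
      _ ≤ (A + B) ^ 2 / (4 * m ^ 2) + (A - B) ^ 2 / (4 * m ^ 2) := by
          have hm2c : 4 * m ^ 2 ≤ 4 * c ^ 2 := by
            have h := pow_le_pow_left₀ hm0.le hmc 2; linarith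
          have hm2s : 4 * m ^ 2 ≤ 4 * s ^ 2 := by
            have h := pow_le_pow_left₀ hm0.le hms 2; linarith
          exact add_le_add
            (div_le_div_of_nonneg_left (sq_nonneg _) (by positivity) hm2c)
            (div_le_div_of_nonneg_left (sq_nonneg _) (by positivity) hm2s)
      _ = ((A + B) ^ 2 + (A - B) ^ 2) / (4 * m ^ 2) := by ring
      _ ≤ w ^ 2 / (4 * m ^ 2) := div_le_div_of_nonneg_right hXY (by positivity)
      _ = (w / (2 * m)) ^ 2 := by
          rw [div_pow]
          congr 1
          ring
  have hR : (0:ℝ) ≤ w / (2 * m) := by positivity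
  exact (pow_le_pow_iff_left₀ (norm_nonneg v) hR two_ne_zero).mp key
end

section
/- Let nᵢ, nⱼ, n_k be unit vectors in the Euclidean plane ℝ², with nᵢ and nⱼ at angle φ ∈ (0, π) (so cos φ = ⟪nᵢ, nⱼ⟫), let cᵢ, cⱼ, c_k be real numbers, let w ≥ 0, and let q be the unique point with ⟪q, nᵢ⟫ + cᵢ = 0 and ⟪q, nⱼ⟫ + cⱼ = 0. If |⟪q, n_k⟫ + c_k| > w/(2·min(sin(φ/2), cos(φ/2))) + w/2, then the three closed strips Sᵢ = {p : |⟪p, nᵢ⟫ + cᵢ| ≤ w/2}, Sⱼ = {p : |⟪p, nⱼ⟫ + cⱼ| ≤ w/2}, and S_k = {p : |⟪p, n_k⟫ + c_k| ≤ w/2} have empty intersection: Sᵢ ∩ Sⱼ ∩ S_k = ∅. -/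
open scoped RealInnerProductSpace

private lemma norm_eq_one_of_inner_self (u : EuclideanSpace ℝ (Fin 2)) (h : ⟪u, u⟫ = 1) :
    ‖u‖ = 1 := by
  have h2 : ‖u‖ ^ 2 = 1 := by rw [← real_inner_self_eq_norm_sq]; exact h
  have h3 : (‖u‖ - 1) * (‖u‖ + 1) = 0 := by nlinarith
  rcases mul_eq_zero.mp h3 with h4 | h4
  · linarith
  · nlinarith [norm_nonneg u]

/-- Sufficient condition for three closed strips (seam overlaps) of width `w` to have empty
triple intersection: if the distance expression of the intersection point `q` of seams `i`
and `j` to seam `k` exceeds `w / (2 · min (sin (φ/2)) (cos (φ/2))) + w/2`, then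
`Sᵢ ∩ Sⱼ ∩ S_k = ∅`. -/
theorem stmt_7 (ni nj nk : EuclideanSpace ℝ (Fin 2))
    (hni : ‖ni‖ = 1) (hnj : ‖nj‖ = 1) (hnk : ‖nk‖ = 1)
    (φ : ℝ) (hφ : φ ∈ Set.Ioo 0 Real.pi) (hcos : Real.cos φ = ⟪ni, nj⟫)
    (ci cj ck w : ℝ) (hw : 0 ≤ w) (q : EuclideanSpace ℝ (Fin 2))
    (hqi : ⟪q, ni⟫ + ci = 0) (hqj : ⟪q, nj⟫ + cj = 0)
    (hfar : w / (2 * min (Real.sin (φ / 2)) (Real.cos (φ / 2))) + w / 2 < |⟪q, nk⟫ + ck|) :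
    {p : EuclideanSpace ℝ (Fin 2) | |⟪p, ni⟫ + ci| ≤ w / 2} ∩
        {p : EuclideanSpace ℝ (Fin 2) | |⟪p, nj⟫ + cj| ≤ w / 2} ∩
        {p : EuclideanSpace ℝ (Fin 2) | |⟪p, nk⟫ + ck| ≤ w / 2} = ∅ := by
  rw [Set.eq_empty_iff_forall_notMem]
  rintro p ⟨⟨hi, hj⟩, hk⟩
  simp only [Set.mem_setOf_eq] at hi hj hk
  obtain ⟨hφ0, hφπ⟩ := hφ
  have hs : 0 < Real.sin (φ / 2) :=
    Real.sin_pos_of_pos_of_lt_pi (by linarith) (by linarith [Real.pi_pos])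
  have hc : 0 < Real.cos (φ / 2) :=
    Real.cos_pos_of_mem_Ioo ⟨by linarith [Real.pi_pos], by linarith⟩
  set s := Real.sin (φ / 2) with hs_def
  set c := Real.cos (φ / 2) with hc_def
  set m := min s c with hm_def
  have hm : 0 < m := lt_min hs hc
  -- trig identities
  have c2 : c ^ 2 = 1 / 2 + Real.cos φ / 2 := by
    have := Real.cos_sq (φ / 2)
    rwa [show 2 * (φ / 2) = φ by ring] at this
  have s2 : s ^ 2 = 1 / 2 - Real.cos φ / 2 := by
    have := Real.sin_sq_add_cos_sq (φ / 2)
    rw [← hs_def, ← hc_def] at this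
    linarith
  -- basic inner products
  have hii : ⟪ni, ni⟫ = 1 := by rw [real_inner_self_eq_norm_sq, hni]; norm_num
  have hjj : ⟪nj, nj⟫ = 1 := by rw [real_inner_self_eq_norm_sq, hnj]; norm_num
  have hij : ⟪ni, nj⟫ = Real.cos φ := hcos.symm
  have hji : ⟪nj, ni⟫ = Real.cos φ := by rw [real_inner_comm]; exact hcos.symm
  set u₁ : EuclideanSpace ℝ (Fin 2) := (2 * c)⁻¹ • (ni + nj) with hu₁_def
  set u₂ : EuclideanSpace ℝ (Fin 2) := (2 * s)⁻¹ • (ni - nj) with hu₂_def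
  have hA : ⟪ni + nj, ni + nj⟫ = 4 * c ^ 2 := by
    simp only [inner_add_left, inner_add_right, hii, hjj, hij, hji]
    linarith
  have hB : ⟪ni - nj, ni - nj⟫ = 4 * s ^ 2 := by
    simp only [inner_sub_left, inner_sub_right, hii, hjj, hij, hji]
    linarith
  have hC : ⟪ni + nj, ni - nj⟫ = 0 := by
    simp only [inner_add_left, inner_sub_left, inner_sub_right, hii, hjj, hij, hji]
    ring
  have hC' : ⟪ni - nj, ni + nj⟫ = 0 := by
    simp only [inner_add_left, inner_sub_left, inner_add_right, hii, hjj, hij, hji]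
    ring
  have hcne : (2 * c) ≠ 0 := by positivity
  have hsne : (2 * s) ≠ 0 := by positivity
  have h11 : ⟪u₁, u₁⟫ = 1 := by
    rw [hu₁_def, real_inner_smul_left, real_inner_smul_right, hA]
    field_simp
    ring
  have h22 : ⟪u₂, u₂⟫ = 1 := by
    rw [hu₂_def, real_inner_smul_left, real_inner_smul_right, hB]
    field_simp
    ring
  have h12 : ⟪u₁, u₂⟫ = 0 := by
    rw [hu₁_def, hu₂_def, real_inner_smul_left, real_inner_smul_right, hC]
    ring
  have h21 : ⟪u₂, u₁⟫ = 0 := by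
    rw [hu₁_def, hu₂_def, real_inner_smul_left, real_inner_smul_right, hC']
    ring
  have horth : Orthonormal ℝ ![u₁, u₂] := by
    rw [orthonormal_iff_ite]
    intro i j
    fin_cases i <;> fin_cases j <;>
      simp [h11, h12, h21, h22, norm_eq_one_of_inner_self u₁ h11, norm_eq_one_of_inner_self u₂ h22]
  have hcard : Fintype.card (Fin 2) = Module.finrank ℝ (EuclideanSpace ℝ (Fin 2)) := by
    simp [finrank_euclideanSpace_fin]
  let B := basisOfOrthonormalOfCardEqFinrank horth hcard
  have hB_coe : ⇑B = ![u₁, u₂] := coe_basisOfOrthonormalOfCardEqFinrank horth hcard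
  set v : EuclideanSpace ℝ (Fin 2) := p - q with hv_def
  set a := B.repr v 0 with ha_def
  set b := B.repr v 1 with hb_def
  have hv : v = a • u₁ + b • u₂ := by
    have h := (B.sum_repr v).symm
    rw [Fin.sum_univ_two] at h
    have e0 : B 0 = u₁ := by rw [show (B : Fin 2 → _) 0 = ![u₁, u₂] 0 from congrFun hB_coe 0]; rfl
    have e1 : B 1 = u₂ := by rw [show (B : Fin 2 → _) 1 = ![u₁, u₂] 1 from congrFun hB_coe 1]; rfl
    rw [e0, e1] at h
    exact h
  -- coordinates of v in the seam frame
  have hx : ⟪v, ni⟫ = ⟪p, ni⟫ + ci := by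
    rw [hv_def, inner_sub_left]; linarith
  have hy : ⟪v, nj⟫ = ⟪p, nj⟫ + cj := by
    rw [hv_def, inner_sub_left]; linarith
  set x := ⟪v, ni⟫ with hx_def
  set y := ⟪v, nj⟫ with hy_def
  have hxw : |x| ≤ w / 2 := by rw [hx]; exact hi
  have hyw : |y| ≤ w / 2 := by rw [hy]; exact hj
  -- inner products of v with u₁, u₂ give the coefficients
  have hvu1 : ⟪v, u₁⟫ = a := by
    conv_lhs => rw [hv]
    simp only [inner_add_left, real_inner_smul_left, h11, h21]
    ring
  have hvu2 : ⟪v, u₂⟫ = b := by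
    conv_lhs => rw [hv]
    simp only [inner_add_left, real_inner_smul_left, h12, h22]
    ring
  have hxy1 : x + y = 2 * c * a := by
    rw [← hvu1, hu₁_def, real_inner_smul_right, inner_add_right, ← hx_def, ← hy_def]
    field_simp
  have hxy2 : x - y = 2 * s * b := by
    rw [← hvu2, hu₂_def, real_inner_smul_right, inner_sub_right, ← hx_def, ← hy_def]
    field_simp
  -- key bound : m * (|a| + |b|) ≤ w / 2
  obtain ⟨hx1, hx2⟩ := abs_le.mp hxw
  obtain ⟨hy1, hy2⟩ := abs_le.mp hyw
  have habs : |x + y| + |x - y| ≤ w := by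
    rcases abs_cases (x + y) with ⟨e1, _⟩ | ⟨e1, _⟩ <;>
      rcases abs_cases (x - y) with ⟨e2, _⟩ | ⟨e2, _⟩ <;> rw [e1, e2] <;> linarith
  have hma : m * |a| ≤ |x + y| / 2 := by
    have h1 : |x + y| = 2 * c * |a| := by
      rw [hxy1, abs_mul, abs_of_pos (by positivity : (0:ℝ) < 2 * c)]
    rw [h1]
    have := mul_le_mul_of_nonneg_right (min_le_right s c) (abs_nonneg a)
    linarith
  have hmb : m * |b| ≤ |x - y| / 2 := by
    have h1 : |x - y| = 2 * s * |b| := by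
      rw [hxy2, abs_mul, abs_of_pos (by positivity : (0:ℝ) < 2 * s)]
    rw [h1]
    have := mul_le_mul_of_nonneg_right (min_le_left s c) (abs_nonneg b)
    linarith
  have hab : |a| + |b| ≤ w / (2 * m) := by
    rw [le_div_iff₀ (by linarith : (0:ℝ) < 2 * m)]
    calc (|a| + |b|) * (2 * m) = 2 * (m * |a|) + 2 * (m * |b|) := by ring
      _ ≤ 2 * (|x + y| / 2) + 2 * (|x - y| / 2) := by linarith
      _ ≤ w := by linarith
  -- bound |⟪v, nk⟫|
  have hu1n : ‖u₁‖ = 1 := norm_eq_one_of_inner_self u₁ h11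
  have hu2n : ‖u₂‖ = 1 := norm_eq_one_of_inner_self u₂ h22
  have hk1 : |⟪u₁, nk⟫| ≤ 1 := by
    have := abs_real_inner_le_norm u₁ nk
    rwa [hu1n, hnk, one_mul] at this
  have hk2 : |⟪u₂, nk⟫| ≤ 1 := by
    have := abs_real_inner_le_norm u₂ nk
    rwa [hu2n, hnk, one_mul] at this
  have hvk : ⟪v, nk⟫ = a * ⟪u₁, nk⟫ + b * ⟪u₂, nk⟫ := by
    conv_lhs => rw [hv]
    simp only [inner_add_left, real_inner_smul_left]
  have hvkb : |⟪v, nk⟫| ≤ w / (2 * m) := by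
    rw [hvk]
    calc |a * ⟪u₁, nk⟫ + b * ⟪u₂, nk⟫| ≤ |a * ⟪u₁, nk⟫| + |b * ⟪u₂, nk⟫| := abs_add_le _ _
      _ = |a| * |⟪u₁, nk⟫| + |b| * |⟪u₂, nk⟫| := by rw [abs_mul, abs_mul]
      _ ≤ |a| * 1 + |b| * 1 := by
          gcongr
      _ ≤ w / (2 * m) := by simpa using hab
  -- final contradiction
  have hqk : ⟪q, nk⟫ + ck = (⟪p, nk⟫ + ck) - ⟪v, nk⟫ := by
    rw [hv_def, inner_sub_left]; ring
  have : |⟪q, nk⟫ + ck| ≤ w / 2 + w / (2 * m) := by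
    rw [hqk]
    calc |(⟪p, nk⟫ + ck) - ⟪v, nk⟫| ≤ |⟪p, nk⟫ + ck| + |⟪v, nk⟫| := abs_sub _ _
      _ ≤ w / 2 + w / (2 * m) := add_le_add hk hvkb
  linarith
end
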